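/- arXiv:math/0408054 — 3 statements merged into one kernel-verified Lean document; each statement's English description precedes it below -/
import Mathlib

section
/- Let (H_n(x))_{n≥0} be a sequence of rational functions in ℂ(x) such that f(x,y) = Σ_{n≥0} H_n(x) yⁿ, regarded as a formal power series in y with coefficients in ℂ(x), is D-finite in y. For each n let S_n ⊆ ℂ be the set of poles of H_n, and let S = ∪_{n≥0} S_n. Then S has only finitely many accumulation points in ℂ. -/
/-!
Taking the coefficient of `y ^ (m + D)` in the differential equation turns it into a linear
recurrence `∑_{s ≤ d} a_s(x, m) H_{m+s} = 0` whose coefficients are polynomials in `x` and `m`,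
with `a_d ≠ 0` (the terms contributing to a fixed shift `s` have distinct degrees in `m`).
Solving for `H_{m+d}` shows that, apart from the poles of finitely many initial terms, every pole
is a zero of some `x ↦ a_d(x, m)`. Near a point `z` where the leading coefficient of `a_d` in `m`
does not vanish, `a_d(x, m)` has no zero `x` once `m` is large, so the accumulation points of the
poles are among the finitely many zeros of that leading coefficient.
-/

open scoped Classical

/-- Interpret a polynomial `P(x,y) ∈ ℂ[x][y]` as a power series in `y`
with coefficients in `ℂ(x)`. -/
noncomputable def toSeries (P : Polynomial (Polynomial ℂ)) : PowerSeries (RatFunc ℂ) :=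
  ((P.map (algebraMap (Polynomial ℂ) (RatFunc ℂ)) : Polynomial (RatFunc ℂ)) :
    PowerSeries (RatFunc ℂ))

/-- A power series in `y` with coefficients in `ℂ(x)` is D-finite (in `y`) if it satisfies a
nontrivial linear differential equation `Σ_{i=0}^k P_i(x,y) ∂^i f/∂y^i = 0` whose
coefficients are polynomials in `x` and `y`. -/
def IsDFiniteY (f : PowerSeries (RatFunc ℂ)) : Prop :=
  ∃ (k : ℕ) (P : ℕ → Polynomial (Polynomial ℂ)),
    (∃ i, i ≤ k ∧ P i ≠ 0) ∧
    ∑ i ∈ Finset.range (k + 1),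
      toSeries (P i) * ((fun g => PowerSeries.derivative (RatFunc ℂ) g)^[i] f) = 0

open Polynomial Filter
open scoped Topology

section AccPt

variable {X : Type*} [TopologicalSpace X] [T1Space X]

theorem not_accPt_of_finite_inter {A U : Set X} {z : X} (hU : U ∈ 𝓝 z) (hfin : (A ∩ U).Finite) :
    ¬AccPt z (𝓟 A) := by
  intro hz
  obtain ⟨y, ⟨⟨hyU, hy⟩, hyA⟩, hyz⟩ := accPt_iff_nhds.mp hz _
    (inter_mem hU (hfin.sdiff.isClosed.compl_mem_nhds (by simp) : ((A ∩ U) \ {z})ᶜ ∈ 𝓝 z))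
  exact hy ⟨⟨hyA, hyU⟩, hyz⟩

theorem Set.Finite.derivedSet_eq_empty {A : Set X} (hA : A.Finite) : derivedSet A = ∅ :=
  Set.eq_empty_of_forall_notMem fun _ ↦
    not_accPt_of_finite_inter Filter.univ_mem (by rwa [Set.inter_univ])

end AccPt

namespace Polynomial

theorem sum_C_mul_ne_zero_of_monic {R ι : Type*} [Semiring R] [NoZeroDivisors R] {s : Finset ι}
    {c : ι → R} {q : ι → R[X]} (hq : ∀ i ∈ s, (q i).Monic)
    (hinj : Set.InjOn (fun i ↦ (q i).natDegree) s) {b : ι} (hb : b ∈ s) (hcb : c b ≠ 0) :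
    ∑ i ∈ s, C (c i) * q i ≠ 0 := by
  have : Nontrivial R := ⟨_, _, hcb⟩
  have hdeg : ∀ i ∈ s, c i ≠ 0 → (C (c i) * q i).degree = (q i).natDegree := fun i hi hci ↦ by
    rw [degree_C_mul hci, degree_eq_natDegree (hq i hi).ne_zero]
  have hsum := degree_sum_eq_of_disjoint (fun i ↦ C (c i) * q i) s (by
    rintro i ⟨hi, hi0⟩ j ⟨hj, hj0⟩ hij
    have hci : c i ≠ 0 := fun h ↦ hi0 (by simp [h])
    have hcj : c j ≠ 0 := fun h ↦ hj0 (by simp [h])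
    simp only [Function.onFun, Function.comp, hdeg i hi hci, hdeg j hj hcj, ne_eq, Nat.cast_inj]
    exact fun h ↦ hij (hinj hi hj h))
  intro h0
  have hle := Finset.le_sup (f := fun i ↦ (C (c i) * q i).degree) hb
  rw [← hsum, h0, degree_zero, hdeg b hb hcb] at hle
  exact WithBot.coe_ne_bot (le_bot_iff.mp hle)

theorem continuous_evalEval {R : Type*} [CommSemiring R] [TopologicalSpace R]
    [IsTopologicalSemiring R] (A : R[X][X]) : Continuous fun q : R × R ↦ A.evalEval q.1 q.2 := by
  simp only [evalEval, eval_eq_sum_range (p := A), eval_finsetSum, eval_mul, eval_pow, eval_C]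
  exact continuous_finsetSum _ fun r _ ↦
    ((A.coeff r).continuous.comp continuous_fst).mul (continuous_snd.pow r)

theorem evalEval_zero_reverse {R : Type*} [CommSemiring R] (A : R[X][X]) (x : R) :
    A.reverse.evalEval x 0 = A.leadingCoeff.eval x := by
  rw [evalEval, map_zero, ← coeff_zero_eq_eval_zero, coeff_zero_reverse]

theorem evalEval_reverse_inv_mul_pow {K : Type*} [Field K] (A : K[X][X]) (x : K) {y : K}
    (hy : y ≠ 0) : A.reverse.evalEval x y⁻¹ * y ^ A.natDegree = A.evalEval x y := by
  have := invertibleOfNonzero hy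
  have h := eval₂_reverse_mul_pow (evalRingHom x) y A
  rwa [eval₂_evalRingHom, invOf_eq_inv] at h

variable {𝕜 : Type*} [RCLike 𝕜]

/-- `A(x, m) = m ^ deg A * A.reverse(x, 1/m)`, and `A.reverse(x, w)` is continuous with value
`A.leadingCoeff(z)` at `(z, 0)`. -/
theorem eventually_evalEval_natCast_ne_zero {A : 𝕜[X][X]} {z : 𝕜}
    (hz : A.leadingCoeff.eval z ≠ 0) :
    ∀ᶠ p : 𝕜 × ℕ in 𝓝 z ×ˢ atTop, A.evalEval p.1 (p.2 : 𝕜) ≠ 0 := by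
  have hlim : Tendsto (fun p : 𝕜 × ℕ ↦ (p.1, (p.2 : 𝕜)⁻¹)) (𝓝 z ×ˢ atTop) (𝓝 (z, 0)) :=
    tendsto_fst.prodMk_nhds (tendsto_inv_atTop_nhds_zero_nat.comp tendsto_snd)
  have hrev : ∀ᶠ p : 𝕜 × ℕ in 𝓝 z ×ˢ atTop, A.reverse.evalEval p.1 (p.2 : 𝕜)⁻¹ ≠ 0 :=
    ((continuous_evalEval A.reverse).tendsto (z, 0) |>.comp hlim).eventually_ne
      (by rwa [evalEval_zero_reverse])
  have hpos : ∀ᶠ p : 𝕜 × ℕ in 𝓝 z ×ˢ atTop, (p.2 : 𝕜) ≠ 0 :=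
    tendsto_snd.eventually (eventually_ne_atTop 0) |>.mono fun p hp ↦ Nat.cast_ne_zero.mpr hp
  filter_upwards [hrev, hpos] with p hrev hpos
  rw [← evalEval_reverse_inv_mul_pow A p.1 hpos]
  exact mul_ne_zero hrev (pow_ne_zero _ hpos)

theorem eventually_eval_natCast_ne_zero {A : 𝕜[X][X]} (hA : A ≠ 0) :
    ∀ᶠ m : ℕ in atTop, A.eval (C (m : 𝕜)) ≠ 0 := by
  obtain ⟨z, hz⟩ : ∃ z, A.leadingCoeff.eval z ≠ 0 := by
    by_contra! h
    exact leadingCoeff_ne_zero.mpr hA (Polynomial.funext (by simpa using h))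
  exact (eventually_evalEval_natCast_ne_zero hz).curry.self_of_nhds.mono
    fun m hm h0 ↦ hm (by rw [evalEval, h0, eval_zero])

theorem derivedSet_iUnion_setOf_evalEval_eq_zero_subset {A : 𝕜[X][X]} {M : ℕ}
    (hM : ∀ m ≥ M, A.eval (C (m : 𝕜)) ≠ 0) :
    derivedSet (⋃ m ≥ M, {x | A.evalEval x (m : 𝕜) = 0}) ⊆ {z | A.leadingCoeff.eval z = 0} := by
  intro z hz
  by_contra hlc
  obtain ⟨U, hU, N, hN⟩ : ∃ U ∈ 𝓝 z, ∃ N : ℕ, ∀ x ∈ U, ∀ m ≥ N, A.evalEval x (m : 𝕜) ≠ 0 := by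
    obtain ⟨p, hp, q, hq, h⟩ := eventually_prod_iff.mp (eventually_evalEval_natCast_ne_zero hlc)
    obtain ⟨N, hN⟩ := eventually_atTop.mp hq
    exact ⟨{x | p x}, hp, N, fun x hx m hm ↦ h hx (hN m hm)⟩
  refine not_accPt_of_finite_inter hU ?_ hz
  refine ((Finset.Ico M N).finite_toSet.biUnion fun m hm ↦
    finite_setOfPred_isRoot (hM m (Finset.mem_Ico.mp hm).1)).subset ?_
  rintro x ⟨hx, hxU⟩
  obtain ⟨m, hm, hx0⟩ := Set.mem_iUnion₂.mp hx
  exact Set.mem_biUnion (Finset.mem_Ico.mpr ⟨hm, not_le.mp fun h ↦ hN x hxU m h hx0⟩) hx0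

end Polynomial

namespace RatFunc

variable {K : Type*} [Field K]

def regularAt (x : K) : Subalgebra K[X] (RatFunc K) where
  carrier := {r | r.denom.eval x ≠ 0}
  mul_mem' {r s} hr hs := ne_zero_of_dvd_ne_zero
    (by rw [Polynomial.eval_mul]; exact mul_ne_zero hr hs) (eval_dvd (denom_mul_dvd r s))
  add_mem' {r s} hr hs := ne_zero_of_dvd_ne_zero
    (by rw [Polynomial.eval_mul]; exact mul_ne_zero hr hs) (eval_dvd (denom_add_dvd r s))
  algebraMap_mem' p := by simp [denom_algebraMap]

theorem mem_regularAt {r : RatFunc K} {x : K} : r ∈ regularAt x ↔ r.denom.eval x ≠ 0 := Iff.rfl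

theorem inv_algebraMap_mem_regularAt {p : K[X]} {x : K} (hp : p.eval x ≠ 0) :
    (algebraMap K[X] (RatFunc K) p)⁻¹ ∈ regularAt x := by
  rw [mem_regularAt, inv_eq_one_div, ← map_one (algebraMap K[X] (RatFunc K))]
  exact ne_zero_of_dvd_ne_zero hp (eval_dvd (denom_div_dvd 1 p))

end RatFunc

section Recurrence

variable {K : Type*} [Field K]

/-- The outer variable of each coefficient `a s` stands for the index `m`. -/
def SatisfiesRecurrence (a : ℕ → K[X][X]) (d : ℕ) (H : ℕ → RatFunc K) : Prop :=
  ∀ m : ℕ, ∑ s ∈ Finset.range (d + 1),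
    algebraMap K[X] (RatFunc K) ((a s).eval (C (m : K))) * H (m + s) = 0

theorem exists_satisfiesRecurrence_of_sum_eq_zero {a : ℕ → K[X][X]} {L s₀ : ℕ} {H : ℕ → RatFunc K}
    (h : ∀ m : ℕ, ∑ s ∈ Finset.range (L + 1),
      algebraMap K[X] (RatFunc K) ((a s).eval (C (m : K))) * H (m + s) = 0)
    (hs₀ : s₀ ≤ L) (ha : a s₀ ≠ 0) : ∃ d, a d ≠ 0 ∧ SatisfiesRecurrence a d H := by
  set d := Nat.findGreatest (fun s ↦ a s ≠ 0) L
  refine ⟨d, Nat.findGreatest_spec (P := fun s ↦ a s ≠ 0) hs₀ ha, fun m ↦ ?_⟩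
  rw [← h m]
  have hdL := Nat.findGreatest_le (P := fun s ↦ a s ≠ 0) L
  refine Finset.sum_subset (Finset.range_subset_range.mpr (by omega)) fun s hs hsd ↦ ?_
  have ha : a s = 0 := not_not.mp <| Nat.findGreatest_is_greatest (by simp at hsd; omega)
    (by simp at hs; omega)
  rw [ha, eval_zero, map_zero, zero_mul]

theorem SatisfiesRecurrence.mem_regularAt {a : ℕ → K[X][X]} {d : ℕ} {H : ℕ → RatFunc K}
    (hrec : SatisfiesRecurrence a d H) {x : K} {M : ℕ}
    (hinit : ∀ n < M + d, H n ∈ RatFunc.regularAt x)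
    (hlead : ∀ m ≥ M, (a d).evalEval x (m : K) ≠ 0) (n : ℕ) : H n ∈ RatFunc.regularAt x := by
  induction n using Nat.strong_induction_on with
  | _ n ih =>
  rcases lt_or_ge n (M + d) with hn | hn
  · exact hinit n hn
  obtain ⟨m, rfl⟩ : ∃ m, n = m + d := ⟨n - d, by omega⟩
  have hlead := hlead m (by omega)
  have hne : algebraMap K[X] (RatFunc K) ((a d).eval (C (m : K))) ≠ 0 :=
    (map_ne_zero_iff _ (RatFunc.algebraMap_injective K)).mpr
      fun h ↦ hlead (by rw [evalEval, h, Polynomial.eval_zero])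
  have hsolve : H (m + d) = -(∑ s ∈ Finset.range d,
      algebraMap K[X] (RatFunc K) ((a s).eval (C (m : K))) * H (m + s)) *
      (algebraMap K[X] (RatFunc K) ((a d).eval (C (m : K))))⁻¹ := by
    have h := hrec m
    rw [Finset.sum_range_succ, add_eq_zero_iff_neg_eq] at h
    rw [h, mul_comm, inv_mul_cancel_left₀ hne]
  rw [hsolve]
  refine Subalgebra.mul_mem _ (neg_mem (Subalgebra.sum_mem _ fun s hs ↦ ?_))
    (RatFunc.inv_algebraMap_mem_regularAt hlead)
  exact Subalgebra.mul_mem _ (Subalgebra.algebraMap_mem _ _)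
    (ih _ (by simp at hs; omega))

theorem SatisfiesRecurrence.setOf_denom_eval_eq_zero_subset {a : ℕ → K[X][X]} {d : ℕ}
    {H : ℕ → RatFunc K} (hrec : SatisfiesRecurrence a d H) (M : ℕ) :
    ⋃ n, {x | (H n).denom.eval x = 0} ⊆
      (⋃ n < M + d, {x | (H n).denom.eval x = 0}) ∪
        ⋃ m ≥ M, {x | (a d).evalEval x (m : K) = 0} := by
  intro x hx
  by_contra h
  simp only [Set.mem_union, Set.mem_iUnion, Set.mem_ofPred_eq, not_or, not_exists] at h hx
  obtain ⟨n, hn⟩ := hx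
  exact hrec.mem_regularAt (fun n hn' ↦ h.1 n hn') (fun m hm ↦ h.2 m hm) n hn

end Recurrence

theorem coeff_toSeries_mul {p : ℂ[X][X]} {D : ℕ} (hp : p.natDegree ≤ D)
    (g : PowerSeries (RatFunc ℂ)) (m : ℕ) :
    PowerSeries.coeff (m + D) (toSeries p * g) = ∑ j ∈ Finset.range (D + 1),
      algebraMap ℂ[X] (RatFunc ℂ) (p.coeff j) * PowerSeries.coeff (m + D - j) g := by
  rw [PowerSeries.coeff_mul, Finset.Nat.sum_antidiagonal_eq_sum_range_succ_mk]
  simp only [toSeries, Polynomial.coeff_coe, Polynomial.coeff_map]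
  refine (Finset.sum_subset (Finset.range_subset_range.mpr (by omega)) fun j _ hj ↦ ?_).symm
  rw [coeff_eq_zero_of_natDegree_lt (by simp at hj; omega), map_zero, zero_mul]

theorem eval_ascPochhammer_comp_X_add_C (i a m : ℕ) :
    ((ascPochhammer ℂ[X] i).comp (X + C (a : ℂ[X]))).eval (C (m : ℂ)) =
      ((m + a).ascFactorial i : ℂ[X]) := by
  rw [eval_comp, eval_add, eval_X, eval_C, ← ascPochhammer_nat_eq_natCast_ascFactorial]
  push_cast
  rfl

/-- The coefficient of `y ^ (m + D)` in `y ^ j * ∂ⁱf` is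
`(m + D - j + 1) ⋯ (m + D - j + i) * H (m + D - j + i)`; `recurrencePoly P k D s` collects the
contributions of the terms of `∑ Pᵢ ∂ⁱf` with `i + D - j = s`, as a polynomial in `m`. -/
noncomputable def recurrencePoly (P : ℕ → ℂ[X][X]) (k D s : ℕ) : ℂ[X][X] :=
  ∑ ij ∈ (Finset.range (k + 1) ×ˢ Finset.range (D + 1)).filter (fun ij ↦ ij.1 + D - ij.2 = s),
    C ((P ij.1).coeff ij.2) *
      (ascPochhammer ℂ[X] ij.1).comp (X + C ((D - ij.2 + 1 : ℕ) : ℂ[X]))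

theorem recurrencePoly_ne_zero {P : ℕ → ℂ[X][X]} {k D i : ℕ} (hi : i ≤ k) (hP : P i ≠ 0)
    (hD : (P i).natDegree ≤ D) : recurrencePoly P k D (i + D - (P i).natDegree) ≠ 0 := by
  refine sum_C_mul_ne_zero_of_monic (fun ij _ ↦ (monic_ascPochhammer _ _).comp_X_add_C _)
    ?_ (b := (i, (P i).natDegree)) (by simp; omega) (leadingCoeff_ne_zero.mpr hP)
  intro ij hij ij' hij' h
  simp only [natDegree_comp, ascPochhammer_natDegree, natDegree_X_add_C, mul_one] at h
  simp only [Finset.coe_filter, Finset.mem_product, Finset.mem_range, Set.mem_ofPred_eq]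
    at hij hij'
  ext <;> omega

theorem sum_recurrencePoly_eval_mul_eq_zero {H : ℕ → RatFunc ℂ} {P : ℕ → ℂ[X][X]} {k D : ℕ}
    (hD : ∀ i ∈ Finset.range (k + 1), (P i).natDegree ≤ D)
    (heq : ∑ i ∈ Finset.range (k + 1), toSeries (P i) *
      ((fun g ↦ PowerSeries.derivative (RatFunc ℂ) g)^[i] (PowerSeries.mk H)) = 0) (m : ℕ) :
    ∑ s ∈ Finset.range (D + k + 1), algebraMap ℂ[X] (RatFunc ℂ)
      ((recurrencePoly P k D s).eval (C (m : ℂ))) * H (m + s) = 0 := by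
  have hcoeff := congrArg (PowerSeries.coeff (m + D)) heq
  rw [map_sum, map_zero] at hcoeff
  rw [← hcoeff]
  calc _ = ∑ ij ∈ Finset.range (k + 1) ×ˢ Finset.range (D + 1),
          algebraMap ℂ[X] (RatFunc ℂ) ((P ij.1).coeff ij.2) *
            ((m + (D - ij.2 + 1)).ascFactorial ij.1 : RatFunc ℂ) *
              H (m + (ij.1 + D - ij.2)) := by
        rw [← Finset.sum_fiberwise_of_maps_to (t := Finset.range (D + k + 1))
          (g := fun ij : ℕ × ℕ ↦ ij.1 + D - ij.2) fun ij hij ↦ by simp at hij ⊢; omega]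
        refine Finset.sum_congr rfl fun s _ ↦ ?_
        rw [recurrencePoly, eval_finsetSum, map_sum, Finset.sum_mul]
        refine Finset.sum_congr rfl fun ij hij ↦ ?_
        rw [(Finset.mem_filter.mp hij).2, eval_mul, eval_C, eval_ascPochhammer_comp_X_add_C,
          map_mul, map_natCast]
    _ = _ := by
        rw [Finset.sum_product]
        refine Finset.sum_congr rfl fun i hi ↦ ?_
        rw [coeff_toSeries_mul (hD i hi)]
        refine Finset.sum_congr rfl fun j hj ↦ ?_
        rw [show (fun g ↦ PowerSeries.derivative (RatFunc ℂ) g) =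
          PowerSeries.derivative (RatFunc ℂ) from rfl, PowerSeries.coeff_iterate_derivative,
          PowerSeries.coeff_mk]
        simp only [Finset.mem_range] at hj
        rw [show m + D - j + 1 = m + (D - j + 1) by omega,
          show m + D - j + i = m + (i + D - j) by omega, mul_assoc]

theorem exists_satisfiesRecurrence_of_isDFiniteY {H : ℕ → RatFunc ℂ}
    (hD : IsDFiniteY (PowerSeries.mk H)) :
    ∃ (a : ℕ → ℂ[X][X]) (d : ℕ), a d ≠ 0 ∧ SatisfiesRecurrence a d H := by
  obtain ⟨k, P, ⟨i, hik, hPi⟩, heq⟩ := hD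
  set D := (Finset.range (k + 1)).sup fun i ↦ (P i).natDegree
  have hD : ∀ i ∈ Finset.range (k + 1), (P i).natDegree ≤ D := fun i hi ↦
    Finset.le_sup (f := fun i ↦ (P i).natDegree) hi
  exact ⟨_, exists_satisfiesRecurrence_of_sum_eq_zero
    (sum_recurrencePoly_eval_mul_eq_zero hD heq) (by omega)
    (recurrencePoly_ne_zero hik hPi (hD i (by simp; omega)))⟩

/-- If `f(x,y) = Σ_n H_n(x) yⁿ` is D-finite in `y` with rational-function coefficients
`H_n(x) ∈ ℂ(x)`, then the union `S` over all `n` of the sets of poles of the `H_n`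
(zeros of the denominator of `H_n` in lowest terms) has only finitely many
accumulation points in `ℂ`. -/
theorem dfinite_poles_finitely_many_accumulation (H : ℕ → RatFunc ℂ)
    (hD : IsDFiniteY (PowerSeries.mk fun n => H n)) :
    {z : ℂ | AccPt z (Filter.principal (⋃ n : ℕ, {ζ : ℂ | ((H n).denom).eval ζ = 0}))}.Finite := by
  obtain ⟨a, d, had, hrec⟩ := exists_satisfiesRecurrence_of_isDFiniteY hD
  obtain ⟨M, hM⟩ := eventually_atTop.mp (eventually_eval_natCast_ne_zero had)
  have hinit : (⋃ n < M + d, {x : ℂ | (H n).denom.eval x = 0}).Finite :=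
    (Set.finite_lt_nat _).biUnion fun n _ ↦ finite_setOfPred_isRoot (H n).denom_ne_zero
  refine (finite_setOfPred_isRoot (leadingCoeff_ne_zero.mpr had)).subset ?_
  calc derivedSet _
      ⊆ derivedSet _ := derivedSet_mono _ _ (hrec.setOf_denom_eval_eq_zero_subset M)
    _ = derivedSet _ ∪ derivedSet _ := derivedSet_union _ _
    _ ⊆ _ := Set.union_subset (by rw [hinit.derivedSet_eq_empty]; exact Set.empty_subset _)
        (derivedSet_iUnion_setOf_evalEval_eq_zero_subset hM)
end

section
/- For every n ≥ 0, the power series H_n(x) is a rational function of x: there exist polynomials p, q ∈ ℚ[x] with q · H_n = p (as formal power series), such that deg p ≤ deg q and q is a product of cyclotomic polynomials. -/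
open scoped Classical

/-- A bond of the square lattice: `(true, a, b)` is the vertical bond from `(a,b)` to
`(a,b+1)`; `(false, a, b)` is the horizontal bond from `(a,b)` to `(a+1,b)`. -/
abbrev Bond := Bool × ℤ × ℤ

/-- The source (south-west) endpoint of a bond. -/
def bondSrc (b : Bond) : ℤ × ℤ := b.2

/-- The target (north, resp. east) endpoint of a bond. -/
def bondTgt (b : Bond) : ℤ × ℤ :=
  if b.1 then (b.2.1, b.2.2 + 1) else (b.2.1 + 1, b.2.2)

/-- `Reaches A v w` : one may travel from `v` to `w` along bonds of `A`, taking only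
north and east steps. -/
inductive Reaches (A : Finset Bond) : ℤ × ℤ → ℤ × ℤ → Prop
  | refl (v : ℤ × ℤ) : Reaches A v v
  | step {v : ℤ × ℤ} (b : Bond) (hb : b ∈ A) (hv : Reaches A v (bondSrc b)) :
      Reaches A v (bondTgt b)

/-- A directed bond-animal, translated so that its root vertex is the origin: a nonempty
finite set of bonds such that every bond may be reached from the root by a path in `A`
taking only north and east steps.  (Each translation class of directed bond-animals has
exactly one representative whose root is the origin.) -/
def IsDirAnimal (A : Finset Bond) : Prop :=
  A.Nonempty ∧ ∀ b ∈ A, Reaches A (0, 0) (bondSrc b)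

/-- Number of horizontal bonds. -/
def hcard (A : Finset Bond) : ℕ := (A.filter fun b => b.1 = false).card

/-- Number of vertical bonds. -/
def vcard (A : Finset Bond) : ℕ := (A.filter fun b => b.1 = true).card

/-- `bCount m n` : the number of directed bond-animals (up to translation) with `m`
horizontal bonds and `n` vertical bonds. -/
noncomputable def bCount (m n : ℕ) : ℕ :=
  Set.ncard {A : Finset Bond | IsDirAnimal A ∧ hcard A = m ∧ vcard A = n}

/-- `H_n(x) = Σ_m b_{m,n} x^m`, with rational coefficients. -/
noncomputable def Hgf (n : ℕ) : PowerSeries ℚ :=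
  PowerSeries.mk fun m => (bCount m n : ℚ)

/-!
Transfer matrix over columns. Removing the last column of a rooted animal leaves a rooted
animal `A'`, and the removed column, given by the rows `V` of its vertical and `H` of its
horizontal bonds, is admissible exactly when each of its bonds is reached from the rows at
which `A'` is left eastwards. So the series `F_{E,k}(x)` counting animals with `k` vertical
bonds that are left at the rows `E` satisfy `F_{E,k} = c + x^|E| Σ F_{E',k-|V|}` over the
admissible columns. A column with `V ≠ ∅` lowers `k`, and one with `V = ∅` has `E ⊆ E'`,
with equality only for the column repeating `E`. By induction on `k` and downwards on `E`,
the only self-loop `F = c + x^a (F + G)` divides by `1 - x^a`, a product of cyclotomic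
polynomials, and `H_n` is the sum of the `F_{E,n}` less the empty animal.
-/

namespace Polynomial

variable {R : Type*} [CommRing R]

def IsCyclotomicProduct (q : R[X]) : Prop :=
  ∃ l : Multiset ℕ, (∀ k ∈ l, k ≠ 0) ∧ q = (l.map fun k => cyclotomic k R).prod

namespace IsCyclotomicProduct

lemma one : IsCyclotomicProduct (1 : R[X]) := ⟨0, by simp, by simp⟩

lemma mul {q₁ q₂ : R[X]} (h₁ : IsCyclotomicProduct q₁) (h₂ : IsCyclotomicProduct q₂) :
    IsCyclotomicProduct (q₁ * q₂) := by
  obtain ⟨l₁, hl₁, rfl⟩ := h₁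
  obtain ⟨l₂, hl₂, rfl⟩ := h₂
  refine ⟨l₁ + l₂, fun k hk => ?_, by rw [Multiset.map_add, Multiset.prod_add]⟩
  rcases Multiset.mem_add.mp hk with hk | hk
  exacts [hl₁ k hk, hl₂ k hk]

lemma monic {q : R[X]} (h : IsCyclotomicProduct q) : q.Monic := by
  obtain ⟨l, -, rfl⟩ := h
  exact monic_multiset_prod_of_monic _ _ fun k _ => cyclotomic.monic k R

end IsCyclotomicProduct

lemma isCyclotomicProduct_X_pow_sub_one {a : ℕ} (ha : a ≠ 0) :
    IsCyclotomicProduct (X ^ a - 1 : R[X]) := by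
  refine ⟨a.divisors.val, fun k hk => (Nat.pos_of_mem_divisors hk).ne', ?_⟩
  rw [← prod_cyclotomic_eq_X_pow_sub_one (Nat.pos_of_ne_zero ha), Finset.prod_eq_multiset_prod]

end Polynomial

namespace PowerSeries

open Polynomial

variable {R : Type*} [CommRing R]

def IsStrictlyProperCyclotomicRational (f : R⟦X⟧) : Prop :=
  ∃ p q : R[X], (q : R⟦X⟧) * f = p ∧ p.degree < q.degree ∧ q.IsCyclotomicProduct

namespace IsStrictlyProperCyclotomicRational

variable [Nontrivial R]

lemma zero : IsStrictlyProperCyclotomicRational (0 : R⟦X⟧) :=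
  ⟨0, 1, by simp, by simp, IsCyclotomicProduct.one⟩

lemma add {f g : R⟦X⟧} (hf : IsStrictlyProperCyclotomicRational f)
    (hg : IsStrictlyProperCyclotomicRational g) : IsStrictlyProperCyclotomicRational (f + g) := by
  obtain ⟨p₁, q₁, h₁, d₁, c₁⟩ := hf
  obtain ⟨p₂, q₂, h₂, d₂, c₂⟩ := hg
  refine ⟨p₁ * q₂ + p₂ * q₁, q₁ * q₂, ?_, ?_, c₁.mul c₂⟩
  · push_cast
    linear_combination (q₂ : R⟦X⟧) * h₁ + (q₁ : R⟦X⟧) * h₂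
  · have hq₁ := c₁.monic
    have hq₂ := c₂.monic
    refine (degree_add_le _ _).trans_lt (max_lt ?_ ?_)
    · rw [hq₂.degree_mul, hq₂.degree_mul]
      exact WithBot.add_lt_add_right (by simp [hq₂.ne_zero]) d₁
    · rw [hq₁.degree_mul, hq₂.degree_mul, add_comm q₁.degree]
      exact WithBot.add_lt_add_right (by simp [hq₁.ne_zero]) d₂

lemma sum {ι : Type*} {s : Finset ι} {f : ι → R⟦X⟧}
    (h : ∀ i ∈ s, IsStrictlyProperCyclotomicRational (f i)) :
    IsStrictlyProperCyclotomicRational (∑ i ∈ s, f i) :=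
  Finset.sum_induction f _ (fun _ _ => add) zero h

/-- Solving `f = c + X^a (f + g)` for `f` only divides by `1 - X^a`. -/
lemma of_eq_C_add_X_pow_mul {f g : R⟦X⟧} {a : ℕ} {c : R} (ha : a ≠ 0)
    (hg : IsStrictlyProperCyclotomicRational g) (h : f = C c + X ^ a * (f + g)) :
    IsStrictlyProperCyclotomicRational f := by
  obtain ⟨p, q, hpq, hdeg, hq⟩ := hg
  refine ⟨-(Polynomial.C c * q) - Polynomial.X ^ a * p, (Polynomial.X ^ a - 1) * q, ?_, ?_,
    (isCyclotomicProduct_X_pow_sub_one ha).mul hq⟩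
  · push_cast
    linear_combination -(q : R⟦X⟧) * h - X ^ a * hpq
  · have hXa : (Polynomial.X ^ a - 1 : R[X]).degree = a := by
      simpa using degree_X_pow_sub_C (R := R) (Nat.pos_of_ne_zero ha) 1
    have hq0 : q.degree ≠ ⊥ := by simp [hq.monic.ne_zero]
    rw [hq.monic.degree_mul, hXa]
    refine (degree_sub_le _ _).trans_lt (max_lt ?_ ?_)
    · calc (-(Polynomial.C c * q)).degree ≤ (Polynomial.C c).degree + q.degree :=
            (degree_neg _).trans_le (degree_mul_le _ _)
        _ ≤ 0 + q.degree := by gcongr; exact degree_C_le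
        _ < a + q.degree :=
            WithBot.add_lt_add_right hq0 (by exact_mod_cast Nat.pos_of_ne_zero ha)
    · calc (Polynomial.X ^ a * p).degree ≤ (Polynomial.X ^ a : R[X]).degree + p.degree :=
            degree_mul_le _ _
        _ ≤ a + p.degree := by gcongr; exact degree_X_pow_le a
        _ < a + q.degree := WithBot.add_lt_add_left (by simp) hdeg

end IsStrictlyProperCyclotomicRational

end PowerSeries

open Finset

def dirCoord (t : Bool) (v : ℤ × ℤ) : ℤ := if t then v.2 else v.1

lemma dirCoord_bondTgt (t : Bool) (b : Bond) :
    dirCoord t (bondTgt b) = dirCoord t (bondSrc b) + if b.1 = t then 1 else 0 := by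
  obtain ⟨s, x, y⟩ := b
  cases s <;> cases t <;> simp [dirCoord, bondTgt, bondSrc]

lemma bondSrc_le_bondTgt (b : Bond) : bondSrc b ≤ bondTgt b := by
  obtain ⟨s, x, y⟩ := b
  cases s <;> simp [bondSrc, bondTgt, Prod.le_def]

namespace Reaches

variable {A : Finset Bond} {u v : ℤ × ℤ}

lemma mono {B : Finset Bond} (hAB : A ⊆ B) (h : Reaches A u v) : Reaches B u v := by
  induction h with
  | refl => exact .refl _
  | step b hb _ ih => exact .step b (hAB hb) ih

lemma le (h : Reaches A u v) : u ≤ v := by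
  induction h with
  | refl => exact le_rfl
  | step b _ _ ih => exact ih.trans (bondSrc_le_bondTgt b)

lemma eq_or_exists (h : Reaches A u v) :
    v = u ∨ ∃ b ∈ A, bondTgt b = v ∧ Reaches A u (bondSrc b) := by
  cases h with
  | refl => exact .inl rfl
  | step b hb hv => exact .inr ⟨b, hb, rfl, hv⟩

lemma filter_tgt_le (h : Reaches A u v) :
    Reaches ({b ∈ A | (bondTgt b).1 ≤ v.1}) u v := by
  induction h with
  | refl => exact .refl _
  | step b hb _ ih =>
    refine .step b (mem_filter.mpr ⟨hb, le_rfl⟩) (ih.mono fun b' hb' => ?_)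
    rw [mem_filter] at hb' ⊢
    exact ⟨hb'.1, hb'.2.trans (Prod.le_def.mp (bondSrc_le_bondTgt b)).1⟩

lemma exists_horizontal_of_fst_lt (h : Reaches A u v) (huv : u.1 < v.1) :
    ∃ r, ((false, v.1 - 1, r) : Bond) ∈ A := by
  induction h with
  | refl => exact absurd huv (lt_irrefl _)
  | step b hb _ ih =>
    obtain ⟨_ | _, x, y⟩ := b
    · exact ⟨y, by simpa [bondTgt] using hb⟩
    · exact ih (by simpa [bondTgt, bondSrc] using huv)

/-- Each step in direction `t` along a path uses a new bond of direction `t`. -/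
lemma dirCoord_sub_le_card (h : Reaches A u v) (t : Bool) :
    dirCoord t v - dirCoord t u ≤
      #{b ∈ A | b.1 = t ∧ dirCoord t (bondSrc b) < dirCoord t v} := by
  induction h with
  | refl => simp
  | step b hb _ ih =>
    rw [dirCoord_bondTgt]
    split_ifs with hbt
    · have hlt : #{b' ∈ A | b'.1 = t ∧ dirCoord t (bondSrc b') < dirCoord t (bondSrc b)} <
          #{b' ∈ A | b'.1 = t ∧ dirCoord t (bondSrc b') < dirCoord t (bondSrc b) + 1} := by
        refine card_lt_card ⟨monotone_filter_right _ fun b' _ hb' => ⟨hb'.1, by omega⟩,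
          fun hsub => ?_⟩
        have := (mem_filter.mp (hsub (mem_filter.mpr ⟨hb, hbt, by omega⟩))).2.2
        omega
      omega
    · simpa using ih

lemma dirCoord_le_card (h : Reaches A (0, 0) v) (t : Bool) :
    dirCoord t v ≤ #{b ∈ A | b.1 = t} := by
  have := h.dirCoord_sub_le_card t
  have hsub :
      #{b ∈ A | b.1 = t ∧ dirCoord t (bondSrc b) < dirCoord t v} ≤ #{b ∈ A | b.1 = t} :=
    card_le_card (monotone_filter_right _ fun _ _ hb => hb.1)
  have h0 : dirCoord t (0, 0) = 0 := by cases t <;> rfl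
  omega

end Reaches

namespace DirectedAnimal

def IsRooted (A : Finset Bond) : Prop := ∀ b ∈ A, Reaches A (0, 0) (bondSrc b)

/-- The largest column index of a bond of `A`; it is `-1` for `A = ∅`, so that the column
following `A` is always `lastCol A + 1`. -/
noncomputable def lastCol (A : Finset Bond) : ℤ := ((A.image fun b => b.2.1).max).unbotD (-1)

def colRows (A : Finset Bond) (t : Bool) (x : ℤ) : Finset ℤ :=
  {b ∈ A | b.1 = t ∧ b.2.1 = x}.image fun b => b.2.2

def column (x : ℤ) (V H : Finset ℤ) : Finset Bond :=
  {true} ×ˢ {x} ×ˢ V ∪ {false} ×ˢ {x} ×ˢ H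

noncomputable def dropLastCol (A : Finset Bond) : Finset Bond := {b ∈ A | b.2.1 ≠ lastCol A}

noncomputable def addCol (A : Finset Bond) (V H : Finset ℤ) : Finset Bond :=
  A ∪ column (lastCol A + 1) V H

/-- The rows at which `A` can be left eastwards, i.e. at which column `lastCol A + 1` is
entered; the empty set is entered at the root. -/
noncomputable def exitRows (A : Finset Bond) : Finset ℤ :=
  if A = ∅ then {0} else colRows A false (lastCol A)

/-- `ColumnReach E V r`: row `r` of a column entered at the rows `E` is reached using its
vertical bonds, which sit at the rows `V`. -/
inductive ColumnReach (E V : Finset ℤ) : ℤ → Prop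
  | entry {r : ℤ} : r ∈ E → ColumnReach E V r
  | up {r : ℤ} : r ∈ V → ColumnReach E V r → ColumnReach E V (r + 1)

def Transition (E V H : Finset ℤ) : Prop :=
  (V ∪ H).Nonempty ∧ ∀ r ∈ V ∪ H, ColumnReach E V r

lemma transition_self {E : Finset ℤ} (hE : E.Nonempty) : Transition E ∅ E :=
  ⟨by simpa using hE, fun _ hr => .entry (by simpa using hr)⟩

lemma Transition.subset_of_empty {E H : Finset ℤ} (h : Transition E ∅ H) : H ⊆ E :=
  fun r hr => by
    cases h.2 r (by simpa using hr) with
    | entry h => exact h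
    | up h _ => exact absurd h (notMem_empty _)

variable {A : Finset Bond} {V H : Finset ℤ}

lemma lastCol_empty : lastCol ∅ = -1 := by simp [lastCol]

lemma exitRows_of_nonempty (hA : A.Nonempty) : exitRows A = colRows A false (lastCol A) :=
  if_neg hA.ne_empty

lemma le_lastCol {b : Bond} (hb : b ∈ A) : b.2.1 ≤ lastCol A := by
  obtain ⟨m, hm⟩ := Finset.max_of_mem (mem_image_of_mem (fun b : Bond => b.2.1) hb)
  have := Finset.le_max_of_eq (mem_image_of_mem (fun b : Bond => b.2.1) hb) hm
  simpa [lastCol, hm] using this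

lemma exists_mem_col_lastCol (hA : A.Nonempty) : ∃ b ∈ A, b.2.1 = lastCol A := by
  obtain ⟨b, hb⟩ := hA
  obtain ⟨m, hm⟩ := Finset.max_of_mem (mem_image_of_mem (fun b : Bond => b.2.1) hb)
  obtain ⟨b', hb', hb'm⟩ := mem_image.mp (Finset.mem_of_max hm)
  exact ⟨b', hb', by simp [lastCol, hm, hb'm]⟩

lemma lastCol_le_of_nonempty {c : ℤ} (hA : A.Nonempty) (h : ∀ b ∈ A, b.2.1 ≤ c) :
    lastCol A ≤ c := by
  obtain ⟨b, hb, hbc⟩ := exists_mem_col_lastCol hA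
  exact hbc ▸ h b hb

lemma lastCol_le {c : ℤ} (hc : -1 ≤ c) (h : ∀ b ∈ A, b.2.1 ≤ c) : lastCol A ≤ c := by
  rcases A.eq_empty_or_nonempty with rfl | hA
  · rwa [lastCol_empty]
  · exact lastCol_le_of_nonempty hA h

@[simp]
lemma mem_colRows {t : Bool} {x r : ℤ} : r ∈ colRows A t x ↔ ((t, x, r) : Bond) ∈ A := by
  simp [colRows]

@[simp]
lemma mem_column {x : ℤ} {b : Bond} :
    b ∈ column x V H ↔ b.2.1 = x ∧ b.2.2 ∈ (if b.1 then V else H) := by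
  obtain ⟨_ | _, y, r⟩ := b <;> simp [column, and_comm, eq_comm]

lemma hcard_column (x : ℤ) : hcard (column x V H) = #H := by
  rw [hcard, column, filter_union, filter_false_of_mem (by simp), filter_true_of_mem (by simp)]
  simp

lemma vcard_column (x : ℤ) : vcard (column x V H) = #V := by
  rw [vcard, column, filter_union, filter_true_of_mem (by simp), filter_false_of_mem (by simp)]
  simp

lemma hcard_union_of_disjoint {B : Finset Bond} (h : Disjoint A B) :
    hcard (A ∪ B) = hcard A + hcard B := by
  rw [hcard, filter_union, card_union_of_disjoint (disjoint_filter_filter h)]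
  rfl

lemma vcard_union_of_disjoint {B : Finset Bond} (h : Disjoint A B) :
    vcard (A ∪ B) = vcard A + vcard B := by
  rw [vcard, filter_union, card_union_of_disjoint (disjoint_filter_filter h)]
  rfl

lemma disjoint_column {x : ℤ} (hx : lastCol A < x) : Disjoint A (column x V H) :=
  disjoint_left.mpr fun b hb hb' => by
    have := le_lastCol hb
    rw [mem_column] at hb'
    omega

lemma hcard_addCol : hcard (addCol A V H) = hcard A + #H := by
  rw [addCol, hcard_union_of_disjoint (disjoint_column (lt_add_one _)), hcard_column]

lemma vcard_addCol : vcard (addCol A V H) = vcard A + #V := by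
  rw [addCol, vcard_union_of_disjoint (disjoint_column (lt_add_one _)), vcard_column]

lemma column_nonempty (x : ℤ) (h : (V ∪ H).Nonempty) : (column x V H).Nonempty := by
  obtain ⟨r, hr⟩ := h
  rcases mem_union.mp hr with hr | hr
  exacts [⟨(true, x, r), by simpa⟩, ⟨(false, x, r), by simpa⟩]

lemma lastCol_addCol (h : (V ∪ H).Nonempty) : lastCol (addCol A V H) = lastCol A + 1 := by
  obtain ⟨b, hb⟩ := column_nonempty (lastCol A + 1) h
  refine le_antisymm (lastCol_le_of_nonempty ⟨b, mem_union_right _ hb⟩ fun b' hb' => ?_) ?_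
  · rcases mem_union.mp hb' with hb' | hb'
    · linarith [le_lastCol hb']
    · exact ((mem_column.mp hb').1).le
  · exact (mem_column.mp hb).1 ▸ le_lastCol (mem_union_right _ hb)

lemma colRows_addCol (t : Bool) :
    colRows (addCol A V H) t (lastCol A + 1) = if t then V else H := by
  ext r
  have : ((t, lastCol A + 1, r) : Bond) ∉ A := fun hb => by linarith [le_lastCol hb]
  simp [addCol, this]

lemma dropLastCol_addCol (h : (V ∪ H).Nonempty) : dropLastCol (addCol A V H) = A := by
  ext b
  rw [dropLastCol, lastCol_addCol h, mem_filter]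
  simp only [addCol, mem_union, mem_column]
  constructor
  · rintro ⟨hb | hb, hcol⟩
    exacts [hb, absurd hb.1 hcol]
  · exact fun hb => ⟨.inl hb, by linarith [le_lastCol hb]⟩

lemma exitRows_addCol (h : (V ∪ H).Nonempty) : exitRows (addCol A V H) = H := by
  obtain ⟨b, hb⟩ := column_nonempty (lastCol A + 1) h
  have hne : addCol A V H ≠ ∅ := ne_empty_of_mem (mem_union_right A hb)
  rw [exitRows, if_neg hne, lastCol_addCol h,
    colRows_addCol, if_neg Bool.false_ne_true]

section Rooted

variable {A : Finset Bond} {V H : Finset ℤ} (hA : IsRooted A)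
include hA

lemma IsRooted.mem_box {b : Bond} (hb : b ∈ A) :
    b.2.1 ∈ Icc (0 : ℤ) (hcard A) ∧ b.2.2 ∈ Icc (0 : ℤ) (vcard A) := by
  have hle := (hA b hb).le
  have hh := (hA b hb).dirCoord_le_card false
  have hv := (hA b hb).dirCoord_le_card true
  simp only [dirCoord, Prod.le_def] at hle hh hv
  exact ⟨mem_Icc.mpr ⟨hle.1, hh⟩, mem_Icc.mpr ⟨hle.2, hv⟩⟩

lemma IsRooted.lastCol_nonneg (hne : A.Nonempty) : 0 ≤ lastCol A := by
  obtain ⟨b, hb, hcol⟩ := exists_mem_col_lastCol hne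
  exact hcol ▸ (Prod.le_def.mp (hA b hb).le).1

lemma IsRooted.neg_one_le_lastCol : -1 ≤ lastCol A := by
  rcases A.eq_empty_or_nonempty with rfl | hne
  · exact lastCol_empty.ge
  · linarith [hA.lastCol_nonneg hne]

lemma IsRooted.colRows_subset (t : Bool) (x : ℤ) : colRows A t x ⊆ Icc (0 : ℤ) (vcard A) :=
  fun _ hr => (hA.mem_box (mem_colRows.mp hr)).2

lemma IsRooted.exitRows_subset : exitRows A ⊆ Icc (0 : ℤ) (vcard A) := by
  unfold exitRows
  split_ifs
  · simp
  · exact hA.colRows_subset _ _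

lemma isRooted_dropLastCol : IsRooted (dropLastCol A) := by
  intro b hb
  obtain ⟨hbA, hbcol⟩ := mem_filter.mp hb
  refine ((hA b hbA).filter_tgt_le).mono fun b' hb' => ?_
  obtain ⟨hb'A, hb'tgt⟩ := mem_filter.mp hb'
  have := (Prod.le_def.mp (bondSrc_le_bondTgt b')).1
  have := le_lastCol hbA
  exact mem_filter.mpr ⟨hb'A, by simp only [bondSrc] at *; omega⟩

lemma IsRooted.lastCol_dropLastCol (hne : A.Nonempty) :
    lastCol (dropLastCol A) + 1 = lastCol A := by
  have h0 := hA.lastCol_nonneg hne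
  have hle : lastCol (dropLastCol A) ≤ lastCol A - 1 :=
    lastCol_le (by omega) fun b hb => by
      have := le_lastCol (mem_filter.mp hb).1
      have := (mem_filter.mp hb).2
      omega
  suffices lastCol A - 1 ≤ lastCol (dropLastCol A) by omega
  rcases h0.eq_or_lt with h0 | h0
  · linarith [(isRooted_dropLastCol hA).neg_one_le_lastCol]
  -- the last column is entered by a horizontal bond from the column before
  obtain ⟨b, hb, hcol⟩ := exists_mem_col_lastCol hne
  obtain ⟨r, hr⟩ := (hA b hb).exists_horizontal_of_fst_lt (by simp [bondSrc]; omega)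
  have : ((false, lastCol A - 1, r) : Bond) ∈ dropLastCol A :=
    mem_filter.mpr ⟨by simpa [bondSrc, hcol] using hr, by simp⟩
  exact le_lastCol this

lemma IsRooted.mem_exitRows_iff {r : ℤ} :
    r ∈ exitRows A ↔ Reaches A (0, 0) (lastCol A + 1, r) := by
  rcases A.eq_empty_or_nonempty with rfl | hne
  · simp only [exitRows, if_pos, lastCol_empty, mem_singleton]
    refine ⟨fun h => by rw [h, neg_add_cancel]; exact .refl _, fun h => ?_⟩
    rcases h.eq_or_exists with h | ⟨b, hb, -⟩
    exacts [congrArg Prod.snd h, absurd hb (notMem_empty b)]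
  rw [exitRows_of_nonempty hne, mem_colRows]
  refine ⟨fun hb => by simpa [bondTgt] using Reaches.step _ hb (hA _ hb), fun h => ?_⟩
  rcases h.eq_or_exists with h | ⟨⟨_ | _, x, y⟩, hb, htgt, -⟩
  · linarith [congrArg Prod.fst h, hA.lastCol_nonneg hne]
  · obtain ⟨hx, rfl⟩ : x = lastCol A ∧ y = r := by simpa [bondTgt] using htgt
    exact hx ▸ hb
  · have hx : x = lastCol A + 1 := by simpa [bondTgt] using congrArg Prod.fst htgt
    linarith [le_lastCol hb]

lemma IsRooted.addCol_dropLastCol (hne : A.Nonempty) :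
    addCol (dropLastCol A) (colRows A true (lastCol A)) (exitRows A) = A := by
  rw [addCol, hA.lastCol_dropLastCol hne, exitRows_of_nonempty hne]
  ext ⟨t, x, y⟩
  by_cases hx : x = lastCol A
  · subst hx
    cases t <;> simp [dropLastCol]
  · simp [dropLastCol, hx]

lemma IsRooted.columnReach_of_reaches (hne : A.Nonempty) {v : ℤ × ℤ}
    (h : Reaches A (0, 0) v) (hv : v.1 = lastCol A) :
    ColumnReach (exitRows (dropLastCol A)) (colRows A true (lastCol A)) v.2 := by
  have hdrop := isRooted_dropLastCol hA
  induction h with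
  | refl =>
    refine .entry (hdrop.mem_exitRows_iff.mpr ?_)
    rw [hA.lastCol_dropLastCol hne, ← hv]
    exact .refl _
  | step b hb _ ih =>
    obtain ⟨_ | _, x, y⟩ := b
    · have hx : x + 1 = lastCol A := by simpa [bondTgt] using hv
      have hb' : ((false, x, y) : Bond) ∈ dropLastCol A := mem_filter.mpr ⟨hb, by simp; omega⟩
      refine .entry (hdrop.mem_exitRows_iff.mpr ?_)
      simpa [bondTgt, hA.lastCol_dropLastCol hne, hx] using Reaches.step _ hb' (hdrop _ hb')
    · have hx : x = lastCol A := by simpa [bondTgt] using hv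
      simpa [bondTgt, bondSrc] using
        ColumnReach.up (mem_colRows.mpr (hx ▸ hb)) (ih (by simpa [bondSrc] using hx))

lemma IsRooted.transition_dropLastCol (hne : A.Nonempty) :
    Transition (exitRows (dropLastCol A)) (colRows A true (lastCol A)) (exitRows A) := by
  rw [exitRows_of_nonempty hne]
  refine ⟨?_, fun r hr => ?_⟩
  · obtain ⟨⟨t, x, y⟩, hb, hx⟩ := exists_mem_col_lastCol hne
    simp only at hx
    subst hx
    cases t
    exacts [⟨y, mem_union_right _ (mem_colRows.mpr hb)⟩,
      ⟨y, mem_union_left _ (mem_colRows.mpr hb)⟩]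
  · obtain ⟨t, hb⟩ : ∃ t, ((t, lastCol A, r) : Bond) ∈ A := by
      rcases mem_union.mp hr with h | h
      exacts [⟨true, mem_colRows.mp h⟩, ⟨false, mem_colRows.mp h⟩]
    exact hA.columnReach_of_reaches hne (hA _ hb) rfl

lemma IsRooted.reaches_addCol_of_columnReach {r : ℤ} (h : ColumnReach (exitRows A) V r) :
    Reaches (addCol A V H) (0, 0) (lastCol A + 1, r) := by
  induction h with
  | entry hr => exact (hA.mem_exitRows_iff.mp hr).mono subset_union_left
  | @up r hr _ ih =>
    have hb : ((true, lastCol A + 1, r) : Bond) ∈ addCol A V H :=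
      mem_union_right _ (by simpa using hr)
    simpa [bondTgt] using Reaches.step _ hb ih

lemma isRooted_addCol (ht : Transition (exitRows A) V H) : IsRooted (addCol A V H) := by
  intro b hb
  rcases mem_union.mp hb with hb | hb
  · exact (hA b hb).mono subset_union_left
  · obtain ⟨t, x, r⟩ := b
    obtain ⟨rfl, hr⟩ := mem_column.mp hb
    have hVH : r ∈ V ∪ H := by cases t <;> simp_all
    exact hA.reaches_addCol_of_columnReach (ht.2 r hVH)

lemma IsRooted.hcard_eq (hne : A.Nonempty) :
    hcard A = hcard (dropLastCol A) + #(exitRows A) := by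
  conv_lhs => rw [← hA.addCol_dropLastCol hne]
  exact hcard_addCol

lemma IsRooted.vcard_eq (hne : A.Nonempty) :
    vcard A = vcard (dropLastCol A) + #(colRows A true (lastCol A)) := by
  conv_lhs => rw [← hA.addCol_dropLastCol hne]
  exact vcard_addCol

end Rooted

noncomputable def box (m k : ℕ) : Finset Bond := univ ×ˢ Icc (0 : ℤ) m ×ˢ Icc (0 : ℤ) k

/-- Unlike `IsDirAnimal`, this admits the empty set (for `m = k = 0`), the initial state of
the transfer matrix. -/
noncomputable def rootedWith (m k : ℕ) : Finset (Finset Bond) :=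
  {A ∈ (box m k).powerset | IsRooted A ∧ hcard A = m ∧ vcard A = k}

noncomputable def count (E : Finset ℤ) (m k : ℕ) : ℕ :=
  #{A ∈ rootedWith m k | exitRows A = E}

noncomputable def rowSets (k : ℕ) : Finset (Finset ℤ) := (Icc (0 : ℤ) k).powerset

variable {A : Finset Bond} {m k : ℕ}

lemma mem_rootedWith : A ∈ rootedWith m k ↔ IsRooted A ∧ hcard A = m ∧ vcard A = k := by
  refine mem_filter.trans ⟨fun h => h.2, fun h => ⟨mem_powerset.mpr fun b hb => ?_, h⟩⟩
  obtain ⟨hA, rfl, rfl⟩ := h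
  simpa [box] using hA.mem_box hb

lemma card_filter_rootedWith (P : Finset Bond → Prop) [DecidablePred P] :
    #{A ∈ rootedWith m k | P A} =
      (if m = 0 ∧ k = 0 ∧ P ∅ then 1 else 0) +
        #{A ∈ rootedWith m k | P A ∧ A.Nonempty} := by
  rw [← card_filter_add_card_filter_not (s := {A ∈ rootedWith m k | P A}) Finset.Nonempty,
    filter_filter, filter_filter, add_comm]
  congr 1
  have hempty : (∅ : Finset Bond) ∈ rootedWith m k ↔ m = 0 ∧ k = 0 := by
    rw [mem_rootedWith]
    simp [IsRooted, hcard, vcard, eq_comm (a := 0)]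
  split_ifs with h
  · rw [card_eq_one]
    refine ⟨∅, eq_singleton_iff_unique_mem.mpr ⟨?_, fun A hA => ?_⟩⟩
    · simp_all
    · simpa using (mem_filter.mp hA).2.2
  · rw [card_eq_zero, filter_eq_empty_iff]
    rintro A hA ⟨hP, hne⟩
    rw [not_nonempty_iff_eq_empty] at hne
    subst hne
    exact h ⟨(hempty.mp hA).1, (hempty.mp hA).2, hP⟩

lemma card_fiber_lastColumn (E E' V : Finset ℤ) (m k : ℕ) :
    #{A ∈ {A ∈ rootedWith m k | exitRows A = E ∧ A.Nonempty} |
        (exitRows (dropLastCol A), colRows A true (lastCol A)) = (E', V)} =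
      if Transition E' V E ∧ #V ≤ k ∧ #E ≤ m then
        count E' (m - #E) (k - #V) else 0 := by
  simp only [filter_filter, Prod.mk.injEq]
  split_ifs with hc
  · obtain ⟨ht, hVk, hEm⟩ := hc
    have hVE := ht.1
    apply card_nbij' dropLastCol (fun A' => addCol A' V E)
    · intro A hA
      simp only [mem_coe, mem_filter, mem_rootedWith] at hA ⊢
      obtain ⟨⟨hroot, rfl, rfl⟩, ⟨rfl, hne⟩, hE', rfl⟩ := hA
      refine ⟨⟨isRooted_dropLastCol hroot, ?_, ?_⟩, hE'⟩
      · rw [hroot.hcard_eq hne, Nat.add_sub_cancel]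
      · rw [hroot.vcard_eq hne, Nat.add_sub_cancel]
    · intro A' hA'
      simp only [mem_coe, mem_filter, mem_rootedWith] at hA' ⊢
      obtain ⟨⟨hroot', hm, hk⟩, rfl⟩ := hA'
      refine ⟨⟨isRooted_addCol hroot' ht, ?_, ?_⟩, ⟨exitRows_addCol hVE, ?_⟩,
        by rw [dropLastCol_addCol hVE], by rw [lastCol_addCol hVE, colRows_addCol, if_pos rfl]⟩
      · rw [hcard_addCol, hm, Nat.sub_add_cancel hEm]
      · rw [vcard_addCol, hk, Nat.sub_add_cancel hVk]
      · exact (column_nonempty _ hVE).mono subset_union_right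
    · intro A hA
      simp only [mem_coe, mem_filter, mem_rootedWith] at hA
      obtain ⟨⟨hroot, -, -⟩, ⟨rfl, hne⟩, -, rfl⟩ := hA
      exact hroot.addCol_dropLastCol hne
    · exact fun A' _ => dropLastCol_addCol hVE
  · rw [card_eq_zero, filter_eq_empty_iff]
    rintro A hA ⟨⟨rfl, hne⟩, rfl, rfl⟩
    obtain ⟨hroot, rfl, rfl⟩ := mem_rootedWith.mp hA
    exact hc ⟨hroot.transition_dropLastCol hne, (hroot.vcard_eq hne).symm ▸ Nat.le_add_left _ _,
      (hroot.hcard_eq hne).symm ▸ Nat.le_add_left _ _⟩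

lemma count_eq (E : Finset ℤ) (m k : ℕ) :
    count E m k = (if m = 0 ∧ k = 0 ∧ E = {0} then 1 else 0) +
      ∑ p ∈ rowSets k ×ˢ rowSets k, if Transition p.1 p.2 E ∧ #p.2 ≤ k ∧ #E ≤ m then
        count p.1 (m - #E) (k - #p.2) else 0 := by
  rw [count, card_filter_rootedWith (fun A => exitRows A = E)]
  congr 1
  · simp [exitRows, eq_comm (a := E)]
  rw [card_eq_sum_card_fiberwise (t := rowSets k ×ˢ rowSets k)
    (f := fun A => (exitRows (dropLastCol A), colRows A true (lastCol A)))]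
  · exact sum_congr rfl fun p _ => card_fiber_lastColumn E p.1 p.2 m k
  intro A hA
  simp only [mem_coe, mem_filter, mem_rootedWith] at hA
  obtain ⟨⟨hroot, -, rfl⟩, -, hne⟩ := hA
  simp only [mem_coe, mem_product, rowSets, mem_powerset]
  refine ⟨(isRooted_dropLastCol hroot).exitRows_subset.trans (Icc_subset_Icc le_rfl ?_),
    hroot.colRows_subset _ _⟩
  exact_mod_cast (hroot.vcard_eq hne) ▸ Nat.le_add_right _ _

open PowerSeries

noncomputable def countSeries (E : Finset ℤ) (k : ℕ) : PowerSeries ℚ :=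
  PowerSeries.mk fun m => (count E m k : ℚ)

lemma countSeries_eq (E : Finset ℤ) (k : ℕ) :
    countSeries E k = C (if k = 0 ∧ E = {0} then 1 else 0) + X ^ #E *
      ∑ p ∈ rowSets k ×ˢ rowSets k,
        if Transition p.1 p.2 E ∧ #p.2 ≤ k then countSeries p.1 (k - #p.2) else 0 := by
  ext m
  rw [countSeries, coeff_mk, count_eq, map_add, coeff_C, coeff_X_pow_mul', map_sum]
  push_cast
  congr 1
  · by_cases hm : m = 0 <;> simp [hm]
  split_ifs with hE
  · refine sum_congr rfl fun p _ => ?_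
    simp [hE, apply_ite (coeff _), countSeries]
  · exact sum_eq_zero fun p _ => by simp [hE]

variable {E : Finset ℤ}

lemma countSeries_eq_zero (h : ¬E ⊆ Icc (0 : ℤ) k) : countSeries E k = 0 := by
  ext m
  rw [countSeries, coeff_mk, map_zero, Nat.cast_eq_zero, count, card_eq_zero,
    filter_eq_empty_iff]
  rintro A hA rfl
  obtain ⟨hroot, -, rfl⟩ := mem_rootedWith.mp hA
  exact h hroot.exitRows_subset

theorem isStrictlyProperCyclotomicRational_countSeries (k : ℕ) (E : Finset ℤ) :
    (countSeries E k).IsStrictlyProperCyclotomicRational := by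
  induction k using Nat.strong_induction_on generalizing E with
  | _ k ihk =>
  by_cases hEk : E ⊆ Icc (0 : ℤ) k
  swap
  · rw [countSeries_eq_zero hEk]
    exact .zero
  refine Finset.strongDownwardInduction (n := #(Icc (0 : ℤ) k))
    (p := fun E => E ⊆ Icc (0 : ℤ) k → (countSeries E k).IsStrictlyProperCyclotomicRational)
    (fun E ihE _ hEk => ?_) E (card_le_card hEk) hEk
  have hself : ((E, ∅) : Finset ℤ × Finset ℤ) ∈ rowSets k ×ˢ rowSets k := by
    simpa [rowSets] using hEk
  have heq := countSeries_eq E k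
  rw [← add_sum_erase _ _ hself] at heq
  set G := ∑ p ∈ (rowSets k ×ˢ rowSets k).erase (E, ∅),
    if Transition p.1 p.2 E ∧ #p.2 ≤ k then countSeries p.1 (k - #p.2) else 0
  have hG : G.IsStrictlyProperCyclotomicRational := by
    refine .sum fun p hp => ?_
    obtain ⟨hpE, hp⟩ := mem_erase.mp hp
    simp only [rowSets, mem_product, mem_powerset] at hp
    split_ifs with ht
    swap
    · exact .zero
    rcases p.2.eq_empty_or_nonempty with hV | hV
    · -- a column without vertical bonds is left only at rows where it is entered
      obtain ⟨E', V⟩ := p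
      simp only at hV ht hp ⊢
      subst hV
      have hsub : E ⊂ E' := ssubset_of_subset_of_ne (ht.1.subset_of_empty)
        (fun h => hpE (by rw [h]))
      simpa using ihE (card_le_card hp.1) hsub hp.1
    · exact ihk _ (Nat.sub_lt (hV.card_pos.trans_le ht.2) hV.card_pos) _
  rcases E.eq_empty_or_nonempty with rfl | hE
  · have hno : ¬Transition (∅ : Finset ℤ) ∅ ∅ := fun h => by simpa using h.1
    rw [heq]
    simpa [hno] using hG
  · simp only [transition_self hE, card_empty, zero_le, and_self, if_true, Nat.sub_zero] at heq
    exact .of_eq_C_add_X_pow_mul (card_ne_zero.mpr hE) hG heq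

lemma card_rootedWith (m k : ℕ) : #(rootedWith m k) = ∑ E ∈ rowSets k, count E m k :=
  card_eq_sum_card_fiberwise fun A hA => by
    obtain ⟨hroot, -, rfl⟩ := mem_rootedWith.mp hA
    exact mem_powerset.mpr hroot.exitRows_subset

lemma bCount_add_ite_eq_card (m n : ℕ) :
    bCount m n + (if m = 0 ∧ n = 0 then 1 else 0) = #(rootedWith m n) := by
  have hset : {A : Finset Bond | IsDirAnimal A ∧ hcard A = m ∧ vcard A = n} =
      ↑{A ∈ rootedWith m n | A.Nonempty} := by
    ext A
    simp only [Set.mem_ofPred_eq, coe_filter, mem_rootedWith, IsDirAnimal, IsRooted]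
    tauto
  have := card_filter_rootedWith (m := m) (k := n) (fun _ => True)
  simp only [filter_true, true_and, and_true] at this
  rw [bCount, hset, Set.ncard_coe_finset, this, add_comm]

lemma Hgf_add_C_eq_sum (n : ℕ) :
    Hgf n + C (if n = 0 then 1 else 0) = ∑ E ∈ rowSets n, countSeries E n := by
  ext m
  simp only [map_add, map_sum, Hgf, countSeries, coeff_mk, coeff_C]
  rw [← Nat.cast_sum, ← card_rootedWith, ← bCount_add_ite_eq_card]
  by_cases hm : m = 0 <;> simp [hm]

end DirectedAnimal

/-- For every `n`, `H_n(x)` is a rational function of `x`: there are polynomials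
`p, q ∈ ℚ[x]` with `q · H_n = p` as formal power series, `deg p ≤ deg q`, and `q` a
product of cyclotomic polynomials. -/
theorem Hn_is_rational_with_cyclotomic_denominator (n : ℕ) :
    ∃ p q : Polynomial ℚ,
      (q : PowerSeries ℚ) * Hgf n = (p : PowerSeries ℚ) ∧
      p.degree ≤ q.degree ∧
      ∃ l : Multiset ℕ, (∀ k ∈ l, k ≠ 0) ∧
        q = (l.map fun k => Polynomial.cyclotomic k ℚ).prod := by
  obtain ⟨p, q, hpq, hdeg, hq⟩ := PowerSeries.IsStrictlyProperCyclotomicRational.sum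
    fun E (_ : E ∈ DirectedAnimal.rowSets n) =>
      DirectedAnimal.isStrictlyProperCyclotomicRational_countSeries n E
  set c : ℚ := if n = 0 then 1 else 0
  refine ⟨p - Polynomial.C c * q, q, ?_, ?_, hq⟩
  · rw [eq_sub_of_add_eq (DirectedAnimal.Hgf_add_C_eq_sum n), mul_sub, hpq]
    push_cast
    ring
  · refine (Polynomial.degree_sub_le _ _).trans (max_le hdeg.le ?_)
    calc (Polynomial.C c * q).degree ≤ (Polynomial.C c).degree + q.degree :=
          Polynomial.degree_mul_le _ _
      _ ≤ 0 + q.degree := by gcongr; exact Polynomial.degree_C_le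
      _ = q.degree := zero_add _
end

section
/- For every complex number z with |z| < 1, the series Σ_{n≥1} zⁿ / ((1−zⁿ)(1−z^{n+1})) converges and equals z/(1−z)². -/
/-!
With `u n = z ^ (n + 1) / (1 - z ^ (n + 1))` the summand is `(u n - u (n + 1)) / (1 - z)`, so the
series telescopes to `u 0 / (1 - z) = z / (1 - z) ^ 2`. Unconditional convergence comes from
`u n ~ z ^ (n + 1)`, which makes `u` summable.
-/

open Filter Topology Asymptotics

theorem Summable.hasSum_sub_add_one {G : Type*} [AddCommGroup G] [TopologicalSpace G]
    [IsTopologicalAddGroup G] {u : ℕ → G} (hu : Summable u) :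
    HasSum (fun n => u n - u (n + 1)) (u 0) := by
  have hshift := (hasSum_nat_add_iff' 1).mpr hu.hasSum
  simpa using hu.hasSum.sub hshift

theorem div_one_sub_sub_mul_div_one_sub_mul {K : Type*} [Field K] {a z : K} (ha : 1 - a ≠ 0)
    (haz : 1 - a * z ≠ 0) :
    a / (1 - a) - a * z / (1 - a * z) = (1 - z) * (a / ((1 - a) * (1 - a * z))) := by
  field_simp
  ring

theorem one_sub_pow_succ_ne_zero {𝕜 : Type*} [NormedDivisionRing 𝕜] {z : 𝕜} (hz : ‖z‖ < 1)
    (n : ℕ) : 1 - z ^ (n + 1) ≠ 0 := by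
  rw [sub_ne_zero]
  intro h
  have := pow_lt_one₀ (norm_nonneg z) hz n.succ_ne_zero
  rw [← norm_pow, ← h, norm_one] at this
  exact this.false

theorem summable_pow_succ_div_one_sub_pow_succ {𝕜 : Type*} [NormedField 𝕜] [CompleteSpace 𝕜]
    {z : 𝕜} (hz : ‖z‖ < 1) : Summable fun n : ℕ => z ^ (n + 1) / (1 - z ^ (n + 1)) := by
  have hpow : Tendsto (fun n : ℕ => z ^ (n + 1)) atTop (𝓝 0) :=
    (tendsto_pow_atTop_nhds_zero_of_norm_lt_one hz).comp (tendsto_add_atTop_nat 1)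
  have hinv : Tendsto (fun n : ℕ => (1 - z ^ (n + 1))⁻¹) atTop (𝓝 1) := by
    simpa using (tendsto_const_nhds (x := (1 : 𝕜)) |>.sub hpow).inv₀ (by simp)
  refine summable_of_isBigO_nat (g := fun n => ‖z‖ ^ (n + 1)) ?_ ?_
  · exact (summable_nat_add_iff 1).mpr (summable_geometric_of_lt_one (norm_nonneg z) hz)
  · simpa [div_eq_mul_inv, norm_pow] using
      (isBigO_refl (fun n : ℕ => z ^ (n + 1)) atTop).norm_right.mul (hinv.isBigO_one ℝ)

/-- For every complex `z` with `|z| < 1`, the series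
`Σ_{n≥1} zⁿ/((1−zⁿ)(1−z^{n+1}))` converges and its sum equals `z/(1−z)²`.
(The summand indexed by `n : ℕ` below corresponds to the term `n + 1 ≥ 1`.) -/
theorem sum_zn_div_eq (z : ℂ) (hz : ‖z‖ < 1) :
    HasSum (fun n : ℕ => z ^ (n + 1) / ((1 - z ^ (n + 1)) * (1 - z ^ (n + 2))))
      (z / (1 - z) ^ 2) := by
  have hne := one_sub_pow_succ_ne_zero hz
  have hz1 : 1 - z ≠ 0 := by simpa using hne 0
  have hsum := (summable_pow_succ_div_one_sub_pow_succ hz).hasSum_sub_add_one.div_const (1 - z)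
  rw [zero_add, pow_one, div_div, ← sq] at hsum
  refine hsum.congr_fun fun n => ?_
  have hne' : 1 - z ^ (n + 1) * z ≠ 0 := by simpa [pow_succ] using hne (n + 1)
  rw [eq_div_iff hz1, pow_succ z (n + 1),
    div_one_sub_sub_mul_div_one_sub_mul (hne n) hne', mul_comm]
end
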